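/- arXiv:2511.20771 — 4 statements merged into one kernel-verified Lean document; each statement's English description precedes it below -/
import Mathlib

section
/- Let Γ be a tree extension of a rooted DAG N whose root ρ has out-degree 1. If N is binary (max in-degree and out-degree at most 2), then for every non-root vertex v of Γ it holds that |HW_v(Γ)| ≤ |GW_v(Γ)| + 1, where HW_v(Γ) := {(u,w) ∈ A(N) : u ≥_Γ v >_Γ w} and GW_v(Γ) := {(u,w) ∈ A(N) : u >_Γ v ≥_Γ w}. -/
/-- A finite digraph on vertex type `V`. -/
structure Digr (V : Type) where
  verts : Finset V
  arcs  : Finset (V × V)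
  arc_mem : ∀ a ∈ arcs, a.1 ∈ verts ∧ a.2 ∈ verts ∧ a.1 ≠ a.2

namespace Digr

variable {V : Type} [DecidableEq V]

def Adj (D : Digr V) (u v : V) : Prop := (u, v) ∈ D.arcs

def Reach (D : Digr V) : V → V → Prop := Relation.ReflTransGen D.Adj

def SReach (D : Digr V) : V → V → Prop := Relation.TransGen D.Adj

def Acyclic (D : Digr V) : Prop := ∀ v, ¬ D.SReach v v

def inDeg (D : Digr V) (v : V) : ℕ := (D.arcs.filter fun a => a.2 = v).card

def outDeg (D : Digr V) (v : V) : ℕ := (D.arcs.filter fun a => a.1 = v).card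

def maxOutDeg (D : Digr V) : ℕ := D.verts.sup D.outDeg

def IsRoot (D : Digr V) (v : V) : Prop := v ∈ D.verts ∧ D.inDeg v = 0

/-- A rooted DAG: acyclic with exactly one root. -/
def Rooted (D : Digr V) : Prop := D.Acyclic ∧ ∃! r, D.IsRoot r

/-- A rooted DAG all of whose vertices are reachable from the root. -/
def RootedConn (D : Digr V) : Prop :=
  D.Acyclic ∧ ∃ r, D.IsRoot r ∧ ∀ v ∈ D.verts, D.Reach r v

def leaves (D : Digr V) : Set V := {v | v ∈ D.verts ∧ D.outDeg v = 0}

/-- An out-tree: a rooted DAG in which every vertex has in-degree at most 1. -/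
def IsOutTree (D : Digr V) : Prop := D.Rooted ∧ ∀ v ∈ D.verts, D.inDeg v ≤ 1

/-- `Γ` is a tree extension of `D`. -/
def IsTreeExt (D Γ : Digr V) : Prop :=
  Γ.IsOutTree ∧ Γ.verts = D.verts ∧ ∀ a ∈ D.arcs, Γ.SReach a.1 a.2

/-- `GW_t(Γ) = {(u,v) ∈ A(D) | u >_Γ t ≥_Γ v}`. -/
def GW (D Γ : Digr V) (t : V) : Set (V × V) :=
  {a | a ∈ D.arcs ∧ Γ.SReach a.1 t ∧ Γ.Reach t a.2}

/-- `HW_t(Γ) = {(u,v) ∈ A(D) | u ≥_Γ t >_Γ v}`. -/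
def HW (D Γ : Digr V) (t : V) : Set (V × V) :=
  {a | a ∈ D.arcs ∧ Γ.Reach a.1 t ∧ Γ.SReach t a.2}

/-- `sw_D(Γ)`. -/
noncomputable def swOf (D Γ : Digr V) : ℕ := Γ.verts.sup fun t => (GW D Γ t).ncard

/-- The scanwidth of `D`: minimum width over all tree extensions. -/
noncomputable def scanwidth (D : Digr V) : ℕ :=
  sInf {k | ∃ Γ : Digr V, IsTreeExt D Γ ∧ swOf D Γ = k}

/-- The subgraph of `D` induced by `U` is weakly connected. -/
def WConnOn (D : Digr V) (U : Set V) : Prop :=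
  ∀ u ∈ U, ∀ v ∈ U, Relation.ReflTransGen
    (fun a b => a ∈ U ∧ b ∈ U ∧ ((a, b) ∈ D.arcs ∨ (b, a) ∈ D.arcs)) u v

/-- A canonical tree extension of `D`. -/
def Canonical (D Γ : Digr V) : Prop :=
  IsTreeExt D Γ ∧ ∀ t ∈ Γ.verts, D.WConnOn {v | Γ.Reach t v}

/-- Phylogenetic network: rooted DAG whose root has out-degree ≥ 2 and each
non-root vertex has in-degree 1 or out-degree 1, but not both. -/
def IsNetwork (N : Digr V) : Prop :=
  N.Rooted ∧ ∀ r, N.IsRoot r → 2 ≤ N.outDeg r ∧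
    ∀ v ∈ N.verts, v ≠ r → Xor' (N.inDeg v = 1) (N.outDeg v = 1)

/-- Phylogenetic tree: a network without reticulations. -/
def IsPhyloTree (T : Digr V) : Prop := T.IsNetwork ∧ ∀ v ∈ T.verts, T.inDeg v ≤ 1

def BinaryD (D : Digr V) : Prop := ∀ v ∈ D.verts, D.inDeg v ≤ 2 ∧ D.outDeg v ≤ 2

/-- One in-splitting step. -/
def InSplit (D D' : Digr V) : Prop :=
  ∃ v u w x, 3 ≤ D.inDeg v ∧ (u, v) ∈ D.arcs ∧ (w, v) ∈ D.arcs ∧ u ≠ w ∧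
    x ∉ D.verts ∧ D'.verts = insert x D.verts ∧
    D'.arcs = insert (u, x) (insert (w, x) (insert (x, v)
      ((D.arcs.erase (u, v)).erase (w, v))))

/-- One out-splitting step. -/
def OutSplit (D D' : Digr V) : Prop :=
  ∃ v u w x, 3 ≤ D.outDeg v ∧ (v, u) ∈ D.arcs ∧ (v, w) ∈ D.arcs ∧ u ≠ w ∧
    x ∉ D.verts ∧ D'.verts = insert x D.verts ∧
    D'.arcs = insert (v, x) (insert (x, u) (insert (x, w)
      ((D.arcs.erase (v, u)).erase (v, w))))

/-- Binary in-resolution: exhaustive in-splitting. -/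
def BinInRes (D D' : Digr V) : Prop :=
  Relation.ReflTransGen InSplit D D' ∧ ∀ v ∈ D'.verts, D'.inDeg v ≤ 2

/-- Binary out-resolution: exhaustive out-splitting. -/
def BinOutRes (D D' : Digr V) : Prop :=
  Relation.ReflTransGen OutSplit D D' ∧ ∀ v ∈ D'.verts, D'.outDeg v ≤ 2

/-- Binary resolution: binary out-resolution of a binary in-resolution. -/
def BinRes (D D' : Digr V) : Prop := ∃ D'' : Digr V, BinInRes D D'' ∧ BinOutRes D'' D'

def SubD (D' D : Digr V) : Prop := D'.verts ⊆ D.verts ∧ D'.arcs ⊆ D.arcs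

/-- Leaf-monotone subdigraph. -/
def LeafMono (D' D : Digr V) : Prop := SubD D' D ∧ D'.leaves ⊆ D.leaves

/-- One arc subdivision step. -/
def SubdivStep (D D' : Digr V) : Prop :=
  ∃ u v w, (u, v) ∈ D.arcs ∧ w ∉ D.verts ∧ D'.verts = insert w D.verts ∧
    D'.arcs = insert (u, w) (insert (w, v) (D.arcs.erase (u, v)))

/-- `D'` is a subdivision of `D`. -/
def IsSubdivisionOf (D' D : Digr V) : Prop := Relation.ReflTransGen SubdivStep D D'

/-- Leaf-respecting isomorphism. -/
def LeafIso (D D' : Digr V) : Prop :=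
  ∃ ι : V → V, Set.BijOn ι ↑D.verts ↑D'.verts ∧
    (∀ u v, u ∈ D.verts → v ∈ D.verts → ((u, v) ∈ D.arcs ↔ (ι u, ι v) ∈ D'.arcs)) ∧
    ∀ ℓ ∈ D.leaves, ι ℓ = ℓ

/-- `N` firmly displays `T`. -/
def FirmDisp (N T : Digr V) : Prop :=
  ∃ T' N' : Digr V, IsSubdivisionOf T' T ∧ LeafMono N' N ∧ LeafIso T' N'

/-- `N` softly displays `T`. -/
def SoftDisp (N T : Digr V) : Prop :=
  ∃ N' T' : Digr V, BinRes N N' ∧ BinRes T T' ∧ FirmDisp N' T'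

def arcsOfList (l : List V) : List (V × V) := l.zip l.tail

def firstArc (l : List V) : Option (V × V) :=
  match l with
  | a :: b :: _ => some (a, b)
  | _ => none

/-- `l` is (the vertex list of) a directed path in `D`. -/
def IsPathList (D : Digr V) (l : List V) : Prop :=
  l ≠ [] ∧ l.Nodup ∧ (∀ v ∈ l, v ∈ D.verts) ∧ l.Chain' D.Adj

/-- Eventual arc-disjointness of two paths (as vertex lists). -/
def EAD : List V → List V → Prop
  | a :: b :: p, q =>
      2 ≤ q.length ∧
        (List.Disjoint (arcsOfList (a :: b :: p)) (arcsOfList q) ∨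
          (some a = q.head? ∧ EAD (b :: p) q.tail))
  | _, _ => False

/-- Soft pseudo-embedding of the set of arcs `F` (of a forest in `T`) into `N`. -/
structure IsSPE (N T : Digr V) (F : Set (V × V)) (φ : V × V → List V) : Prop where
  path : ∀ a ∈ F, IsPathList N (φ a) ∧ 2 ≤ (φ a).length
  spe1 : ∀ x y z, (x, y) ∈ F → (y, z) ∈ F →
    (φ (x, y)).getLast? = (φ (y, z)).head?
  spe2 : ∀ x y x' y', (x, y) ∈ F → (x', y') ∈ F → x ≠ x' →
    List.Disjoint (arcsOfList (φ (x, y))) (arcsOfList (φ (x', y')))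
  spe3 : ∀ x y y', (x, y) ∈ F → (x, y') ∈ F → y ≠ y' → EAD (φ (x, y)) (φ (x, y'))
  spe4 : ∀ x ℓ, (x, ℓ) ∈ F → ℓ ∈ T.leaves → (φ (x, ℓ)).getLast? = some ℓ

/-- The downward-closed forest below a top-arc set `S`. -/
def ForestBelow (T : Digr V) (S : Set (V × V)) : Set (V × V) :=
  S ∪ {b | b ∈ T.arcs ∧ ∃ a ∈ S, T.Reach a.2 b.1}

/-- `S` is a top-arc set (an arc set whose tails have in-degree 0 in the forest below). -/
def IsTopArcSet (T : Digr V) (S : Set (V × V)) : Prop :=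
  S ⊆ ↑T.arcs ∧ ∀ a ∈ S, ∀ b ∈ ForestBelow T S, b.2 ≠ a.1

def forestLeaves (T : Digr V) (S : Set (V × V)) : Set V :=
  {x | x ∈ T.leaves ∧ ∃ a ∈ ForestBelow T S, a.2 = x}

/-- Signature `[B, S, ψ]` (with `ψ` represented as an `Option`-valued map with support `S`). -/
def IsSig (N T : Digr V) (B S : Set (V × V)) (ψ : V × V → Option (V × V)) : Prop :=
  B ⊆ ↑N.arcs ∧ IsTopArcSet T S ∧
    forestLeaves T S = {ℓ | ℓ ∈ N.leaves ∧ ∃ a ∈ B, N.Reach a.2 ℓ} ∧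
    (∀ a ∈ S, ∃ b ∈ B, ψ a = some b) ∧ ∀ a, a ∉ S → ψ a = none

/-- Valid signature `[B, S, ψ]`. -/
def ValidSig (N T : Digr V) (B S : Set (V × V)) (ψ : V × V → Option (V × V)) : Prop :=
  IsSig N T B S ψ ∧
    ∃ φ : V × V → List V, IsSPE N T (ForestBelow T S) φ ∧
      ∀ a ∈ S, firstArc (φ a) = ψ a

/-- Restriction of (the `Option`-valued) `ψ` to `S`. -/
noncomputable def restrictPsi (ψ : V × V → Option (V × V)) (S : Set (V × V)) :
    V × V → Option (V × V) := fun a =>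
  @ite _ (a ∈ S) (Classical.propDecidable _) (ψ a) none

/-- Downward-closed set of arcs of `T`. -/
def DownClosed (T : Digr V) (F : Set (V × V)) : Prop :=
  F ⊆ ↑T.arcs ∧ ∀ a ∈ F, ∀ b ∈ T.arcs, T.Reach a.2 b.1 → b ∈ F

/-- `D'` arises from `D` by attaching a new root `ρ` above the old root. -/
def AttachRoot (D : Digr V) (ρ : V) (D' : Digr V) : Prop :=
  ρ ∉ D.verts ∧ D'.verts = insert ρ D.verts ∧
    ∃ r, D.IsRoot r ∧ D'.arcs = insert (ρ, r) D.arcs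

/-- Assumption (as:NTGamma): `Ns` binary network, `Ts` tree with the same leaves,
`N` and `T` obtained by attaching new roots `ρN`, `ρT`. -/
def PaperSetup (Ns Ts N T : Digr V) (ρN ρT : V) : Prop :=
  Ns.IsNetwork ∧ BinaryD Ns ∧ IsPhyloTree Ts ∧ Ts.leaves = Ns.leaves ∧
    AttachRoot Ns ρN N ∧ AttachRoot Ts ρT T

/-! ### Stretch gadget (Definition 8, full version) -/

def UdomS (d : ℕ) : Set (ℕ × ℕ) :=
  {p | (2 ≤ p.1 ∧ p.1 ≤ d - 1 ∧ 1 ≤ p.2 ∧ p.2 ≤ p.1) ∨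
    (p.1 = d ∧ 2 ≤ p.2 ∧ p.2 ≤ d - 1)}

def UPdomS (d : ℕ) : Set (ℕ × ℕ) :=
  {p | 3 ≤ p.1 ∧ p.1 ≤ d - 1 ∧ 2 ≤ p.2 ∧ p.2 ≤ p.1 - 1}

def WdomS (d : ℕ) : Set (ℕ × ℕ × ℕ) :=
  {p | 1 ≤ p.1 ∧ p.1 ≤ d - 1 ∧ 1 ≤ p.2.1 ∧ p.2.1 ≤ d - 1 ∧ 1 ≤ p.2.2 ∧ p.2.2 ≤ 4}

/-- The arc set of the network obtained from `D` by stretching `v`. -/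
def stretchArcs (D : Digr V) (v : V) (d : ℕ) (c : ℕ → V)
    (u u' : ℕ → ℕ → V) (w : ℕ → ℕ → ℕ → V) : Set (V × V) :=
  ((D.arcs : Set (V × V)) \ {a | a.1 = v}) ∪
  ({(v, u 2 1), (v, u 2 2)} : Set (V × V)) ∪
  {a | ∃ i, 2 ≤ i ∧ i ≤ d - 2 ∧ (a = (u i 1, u (i+1) 1) ∨ a = (u i 1, u (i+1) 2))} ∪
  {a | ∃ i, 2 ≤ i ∧ i ≤ d - 2 ∧ (a = (u i i, u (i+1) i) ∨ a = (u i i, u (i+1) (i+1)))} ∪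
  {a | ∃ i j, 3 ≤ i ∧ i ≤ d - 1 ∧ 2 ≤ j ∧ j ≤ i - 1 ∧ a = (u i j, u' i j)} ∪
  {a | ∃ i j, 3 ≤ i ∧ i ≤ d - 1 ∧ 2 ≤ j ∧ j ≤ i - 1 ∧
      (a = (u' i j, u (i+1) j) ∨ a = (u' i j, u (i+1) (j+1)))} ∪
  ({(u (d-1) 1, w 1 1 1), (u (d-1) 1, u d 2)} : Set (V × V)) ∪
  ({(u (d-1) (d-1), u d (d-1)), (u (d-1) (d-1), w 1 (d-1) 2)} : Set (V × V)) ∪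
  {a | ∃ j, 2 ≤ j ∧ j ≤ d - 1 ∧ a = (u d j, w 1 (j-1) 2)} ∪
  {a | ∃ i j, 1 ≤ i ∧ i ≤ d - 1 ∧ 1 ≤ j ∧ j ≤ d - 1 ∧
      (a = (w i j 1, w i j 3) ∨ a = (w i j 1, w i j 4) ∨
        a = (w i j 2, w i j 3) ∨ a = (w i j 2, w i j 4))} ∪
  {a | ∃ i j, 1 ≤ i ∧ i ≤ d - 1 ∧ 1 ≤ j ∧ j ≤ d - 2 ∧ a = (w i j 4, w i (j+1) 1)} ∪
  {a | ∃ i, 1 ≤ i ∧ i ≤ d - 2 ∧ a = (w i 1 3, w (i+1) 1 1)} ∪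
  {a | ∃ i, 1 ≤ i ∧ i ≤ d - 2 ∧ a = (w i (d-1) 4, w (i+1) (d-1) 2)} ∪
  {a | ∃ i j, 1 ≤ i ∧ i ≤ d - 2 ∧ 2 ≤ j ∧ j ≤ d - 1 ∧ a = (w i j 3, w (i+1) (j-1) 2)} ∪
  {a | ∃ j, 1 ≤ j ∧ j ≤ d - 1 ∧ a = (w (d-1) j 3, c j)} ∪
  {(w (d-1) (d-1) 4, c d)}

/-- `D'` arises from `D` by stretching the vertex `v` (of out-degree `d ≥ 3`). -/
def StretchV (D : Digr V) (v : V) (D' : Digr V) : Prop :=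
  ∃ (d : ℕ) (c : ℕ → V) (u u' : ℕ → ℕ → V) (w : ℕ → ℕ → ℕ → V),
    d = D.outDeg v ∧ 3 ≤ d ∧
    Set.BijOn c (Set.Icc 1 d) {x | (v, x) ∈ D.arcs} ∧
    Set.InjOn (fun p => u p.1 p.2) (UdomS d) ∧
    Set.InjOn (fun p => u' p.1 p.2) (UPdomS d) ∧
    Set.InjOn (fun p => w p.1 p.2.1 p.2.2) (WdomS d) ∧
    (∀ p ∈ UdomS d, u p.1 p.2 ∉ D.verts) ∧
    (∀ p ∈ UPdomS d, u' p.1 p.2 ∉ D.verts) ∧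
    (∀ p ∈ WdomS d, w p.1 p.2.1 p.2.2 ∉ D.verts) ∧
    (∀ p ∈ UdomS d, ∀ q ∈ UPdomS d, u p.1 p.2 ≠ u' q.1 q.2) ∧
    (∀ p ∈ UdomS d, ∀ q ∈ WdomS d, u p.1 p.2 ≠ w q.1 q.2.1 q.2.2) ∧
    (∀ p ∈ UPdomS d, ∀ q ∈ WdomS d, u' p.1 p.2 ≠ w q.1 q.2.1 q.2.2) ∧
    ((D'.verts : Set V) =
      (D.verts : Set V) ∪ (fun p : ℕ × ℕ => u p.1 p.2) '' UdomS d ∪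
        (fun p : ℕ × ℕ => u' p.1 p.2) '' UPdomS d ∪
        (fun p : ℕ × ℕ × ℕ => w p.1 p.2.1 p.2.2) '' WdomS d) ∧
    (D'.arcs : Set (V × V)) = stretchArcs D v d c u u' w

def StretchStep (D D' : Digr V) : Prop :=
  ∃ v ∈ D.verts, 3 ≤ D.outDeg v ∧ StretchV D v D'

/-- `N'` is `str(N)`: obtained by exhaustively stretching all vertices of
out-degree at least 3. -/
def IsStretch (N N' : Digr V) : Prop :=
  Relation.ReflTransGen StretchStep N N' ∧ ∀ v ∈ N'.verts, N'.outDeg v ≤ 2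

/-! ### Level -/

def underSG (D : Digr V) : SimpleGraph V :=
  SimpleGraph.fromRel fun a b => (a, b) ∈ D.arcs

/-- Two edges of the underlying graph lie in the same biconnected component. -/
def SameBlock (D : Digr V) (e f : Sym2 V) : Prop :=
  e = f ∨ ∃ (x : V) (wlk : (underSG D).Walk x x),
    wlk.IsCycle ∧ e ∈ wlk.edges ∧ f ∈ wlk.edges

def IsReticulation (D : Digr V) (v : V) : Prop := v ∈ D.verts ∧ 2 ≤ D.inDeg v

/-- `D` has level at most `c`: each biconnected component of the underlying graph
contains at most `c` reticulations. -/
def LevelAtMost (D : Digr V) (c : ℕ) : Prop :=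
  ∀ e ∈ (underSG D).edgeSet,
    {v | IsReticulation D v ∧
      ∃ f ∈ (underSG D).edgeSet, SameBlock D e f ∧ v ∈ f}.ncard ≤ c

end Digr

open Digr

/-- in a binary `N` with degree-1 root, `|HW_v(Γ)| ≤ |GW_v(Γ)| + 1`
for every non-root vertex of a tree extension `Γ`. -/
theorem stmt12 {V : Type} [DecidableEq V] (N Γ : Digr V) (ρ : V)
    (hrooted : N.Rooted) (hroot : N.IsRoot ρ) (hρdeg : N.outDeg ρ = 1)
    (hbin : BinaryD N) (hext : IsTreeExt N Γ)
    (v : V) (hv : v ∈ Γ.verts) (hnr : ¬ Γ.IsRoot v) :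
    (HW N Γ v).ncard ≤ (GW N Γ v).ncard + 1 := by
  classical
  obtain ⟨htree, hverts, harc⟩ := hext
  have hacy : Γ.Acyclic := htree.1.1
  have hvN : v ∈ N.verts := hverts ▸ hv
  -- HW \ GW equals arcs of N with tail v
  have hdiff1 : HW N Γ v \ GW N Γ v = ↑(N.arcs.filter fun a => a.1 = v) := by
    ext a
    simp only [Set.mem_diff, HW, GW, Set.mem_setOf_eq, Finset.coe_filter, Set.mem_setOf_eq]
    constructor
    · rintro ⟨⟨ha, hr, hs⟩, hng⟩
      refine ⟨ha, ?_⟩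
      by_contra hne
      apply hng
      refine ⟨ha, ?_, hs.to_reflTransGen⟩
      rcases Relation.reflTransGen_iff_eq_or_transGen.mp hr with h | h
      · exact absurd h.symm hne
      · exact h
    · rintro ⟨ha, h1⟩
      refine ⟨⟨ha, ?_, ?_⟩, ?_⟩
      · exact h1 ▸ Relation.ReflTransGen.refl
      · have := harc a ha
        rw [h1] at this; exact this
      · rintro ⟨-, hs, -⟩
        rw [h1] at hs
        exact hacy v hs
  -- GW \ HW equals arcs of N with head v
  have hdiff2 : GW N Γ v \ HW N Γ v = ↑(N.arcs.filter fun a => a.2 = v) := by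
    ext a
    simp only [Set.mem_diff, HW, GW, Set.mem_setOf_eq, Finset.coe_filter, Set.mem_setOf_eq]
    constructor
    · rintro ⟨⟨ha, hs, hr⟩, hng⟩
      refine ⟨ha, ?_⟩
      by_contra hne
      apply hng
      refine ⟨ha, hs.to_reflTransGen, ?_⟩
      rcases Relation.reflTransGen_iff_eq_or_transGen.mp hr with h | h
      · exact absurd h hne
      · exact h
    · rintro ⟨ha, h2⟩
      refine ⟨⟨ha, ?_, ?_⟩, ?_⟩
      · have := harc a ha
        rw [h2] at this; exact this
      · exact h2 ▸ Relation.ReflTransGen.refl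
      · rintro ⟨-, -, hs⟩
        rw [h2] at hs
        exact hacy v hs
  -- key degree inequality
  have hdeg : N.outDeg v ≤ N.inDeg v + 1 := by
    rcases Nat.eq_zero_or_pos (N.inDeg v) with h0 | hpos
    · have hvroot : N.IsRoot v := ⟨hvN, h0⟩
      obtain ⟨r, -, huniq⟩ := hrooted.2
      have hvρ : v = ρ := (huniq v hvroot).trans (huniq ρ hroot).symm
      have : N.outDeg v = 1 := by rw [hvρ, hρdeg]
      omega
    · exact le_trans (hbin v hvN).2 (by omega)
  -- finiteness
  have hHWfin : (HW N Γ v).Finite :=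
    Set.Finite.subset N.arcs.finite_toSet (fun a ha => ha.1)
  have hGWfin : (GW N Γ v).Finite :=
    Set.Finite.subset N.arcs.finite_toSet (fun a ha => ha.1)
  have e1 := Set.ncard_inter_add_ncard_diff_eq_ncard (HW N Γ v) (GW N Γ v) hHWfin
  have e2 := Set.ncard_inter_add_ncard_diff_eq_ncard (GW N Γ v) (HW N Γ v) hGWfin
  have c1 : (HW N Γ v \ GW N Γ v).ncard = N.outDeg v := by
    rw [hdiff1, Set.ncard_coe_finset]; rfl
  have c2 : (GW N Γ v \ HW N Γ v).ncard = N.inDeg v := by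
    rw [hdiff2, Set.ncard_coe_finset]; rfl
  have hcomm : (HW N Γ v ∩ GW N Γ v).ncard = (GW N Γ v ∩ HW N Γ v).ncard := by
    rw [Set.inter_comm]
  omega
end

section
/- Every canonical tree extension Γ of a rooted DAG D satisfies L(Γ) = L(D) and deg⁺_Γ(v) ≤ deg⁺_D(v) for every vertex v. -/
open Digr

/-! In a canonical tree extension `Γ` of `D`, every vertex `t` with a child `c` is linked to the
subtree below `c` by an arc of `D` leaving `t` itself: a walk from `t` to `c` in the weakly
connected subgraph of `D` below `t` must enter the subtree of `c` somewhere, and it can only do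
so along an arc of `D`, which points down in `Γ`, from a proper ancestor of `c` lying below `t`,
i.e. from `t`. Subtrees of distinct children are disjoint, so these arcs are distinct, whence
`deg⁺_Γ(t) ≤ deg⁺_D(t)`; in particular leaves of `D` are leaves of `Γ`. Conversely an arc
`(u, v)` of `D` is realised by a path of `Γ` starting at `u`, so a leaf of `Γ` is a leaf of `D`. -/

theorem Relation.ReflTransGen.exists_step_across {α : Type*} {r : α → α → Prop} {P : α → Prop}
    {a b : α} (h : Relation.ReflTransGen r a b) (ha : ¬ P a) (hb : P b) :
    ∃ x y, r x y ∧ ¬ P x ∧ P y := by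
  induction h with
  | refl => exact absurd hb ha
  | @tail c b _ hcb ih =>
    by_cases hc : P c
    · exact ih hc
    · exact ⟨c, b, hcb, hc, hb⟩

namespace Digr

variable {V : Type}

theorem Acyclic.reach_antisymm {Γ : Digr V} (hΓ : Γ.Acyclic) {a b : V}
    (hab : Γ.Reach a b) (hba : Γ.Reach b a) : a = b := by
  rcases Relation.ReflTransGen.cases_head hab with rfl | ⟨c, hac, hcb⟩
  · rfl
  · exact (hΓ a (Relation.TransGen.head' hac (hcb.trans hba))).elim

variable [DecidableEq V]

theorem eq_of_mem_arcs_of_inDeg_le_one {Γ : Digr V} (hin : ∀ v ∈ Γ.verts, Γ.inDeg v ≤ 1)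
    {c c' b : V} (h : (c, b) ∈ Γ.arcs) (h' : (c', b) ∈ Γ.arcs) : c = c' :=
  congrArg Prod.fst <| Finset.card_le_one.mp (hin b (Γ.arc_mem _ h).2.1)
    _ (Finset.mem_filter.mpr ⟨h, rfl⟩) _ (Finset.mem_filter.mpr ⟨h', rfl⟩)

theorem reach_total_of_inDeg_le_one {Γ : Digr V} (hin : ∀ v ∈ Γ.verts, Γ.inDeg v ≤ 1)
    {a a' b : V} (h : Γ.Reach a b) (h' : Γ.Reach a' b) : Γ.Reach a a' ∨ Γ.Reach a' a := by
  induction h with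
  | refl => exact Or.inr h'
  | @tail c b hac hcb ih =>
    rcases Relation.ReflTransGen.cases_tail h' with rfl | ⟨d, ha'd, hdb⟩
    · exact Or.inl (hac.tail hcb)
    · exact ih (eq_of_mem_arcs_of_inDeg_le_one hin hdb hcb ▸ ha'd)

theorem IsOutTree.eq_parent_of_reach_of_not_reach {Γ : Digr V} (hΓ : Γ.IsOutTree) {t c x : V}
    (htc : (t, c) ∈ Γ.arcs) (hxc : Γ.Reach x c) (htx : Γ.Reach t x) (hcx : ¬ Γ.Reach c x) :
    x = t := by
  rcases Relation.ReflTransGen.cases_tail hxc with rfl | ⟨d, hxd, hdc⟩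
  · exact absurd .refl hcx
  · rw [eq_of_mem_arcs_of_inDeg_le_one hΓ.2 hdc htc] at hxd
    exact hΓ.1.1.reach_antisymm hxd htx

theorem IsOutTree.not_reach_of_siblings {Γ : Digr V} (hΓ : Γ.IsOutTree) {t c c' x : V}
    (hc : (t, c) ∈ Γ.arcs) (hc' : (t, c') ∈ Γ.arcs) (hne : c ≠ c')
    (hcx : Γ.Reach c x) (hc'x : Γ.Reach c' x) : False := by
  have not_reach_sibling : ∀ {a b : V}, (t, a) ∈ Γ.arcs → (t, b) ∈ Γ.arcs → a ≠ b →
      ¬ Γ.Reach a b := by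
    intro a b ha hb hab hr
    rcases Relation.ReflTransGen.cases_tail hr with rfl | ⟨d, had, hdb⟩
    · exact hab rfl
    · rw [eq_of_mem_arcs_of_inDeg_le_one hΓ.2 hdb hb] at had
      exact hΓ.1.1 t (Relation.TransGen.head' ha had)
  rcases reach_total_of_inDeg_le_one hΓ.2 hcx hc'x with h | h
  · exact not_reach_sibling hc hc' hne h
  · exact not_reach_sibling hc' hc hne.symm h

theorem Canonical.exists_arc_into_child_subtree {D Γ : Digr V} (hcan : Canonical D Γ)
    {t c : V} (htc : (t, c) ∈ Γ.arcs) : ∃ y, (t, y) ∈ D.arcs ∧ Γ.Reach c y := by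
  obtain ⟨⟨hΓ, -, hDΓ⟩, hconn⟩ := hcan
  have hct : ¬ Γ.Reach c t := fun h => hΓ.1.1 t (Relation.TransGen.head' htc h)
  have hwalk := hconn t (Γ.arc_mem _ htc).1 t .refl c (.single htc)
  obtain ⟨x, y, ⟨htx, -, hxy | hyx⟩, hcx, hcy⟩ :=
    hwalk.exists_step_across (P := fun w => Γ.Reach c w) hct .refl
  · have hxc : Γ.Reach x c :=
      (reach_total_of_inDeg_le_one hΓ.2 (hDΓ _ hxy).to_reflTransGen hcy).resolve_right hcx
    rw [hΓ.eq_parent_of_reach_of_not_reach htc hxc htx hcx] at hxy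
    exact ⟨y, hxy, hcy⟩
  · exact absurd (hcy.trans (hDΓ _ hyx).to_reflTransGen) hcx

theorem Canonical.outDeg_le {D Γ : Digr V} (hcan : Canonical D Γ) (t : V) :
    Γ.outDeg t ≤ D.outDeg t := by
  choose! y hyD hyΓ using fun c (h : (t, c) ∈ Γ.arcs) => hcan.exists_arc_into_child_subtree h
  refine Finset.card_le_card_of_injOn (fun a => (t, y a.2)) ?_ ?_
  · rintro ⟨_, c⟩ hc
    simp only [Finset.coe_filter, Set.mem_ofPred_eq] at hc
    obtain ⟨hc, rfl⟩ := hc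
    exact Finset.mem_filter.mpr ⟨hyD c hc, rfl⟩
  · rintro ⟨_, c⟩ hc ⟨_, c'⟩ hc' hcc'
    simp only [Finset.coe_filter, Set.mem_ofPred_eq, Prod.mk.injEq, true_and] at hc hc' hcc'
    obtain ⟨hc, rfl⟩ := hc
    obtain ⟨hc', rfl⟩ := hc'
    by_contra hne
    exact hcan.1.1.not_reach_of_siblings hc hc' (fun h => hne (h ▸ rfl)) (hyΓ _ hc)
      (hcc' ▸ hyΓ _ hc')

theorem IsTreeExt.outDeg_ne_zero {D Γ : Digr V} (hΓ : IsTreeExt D Γ) {u : V}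
    (hu : D.outDeg u ≠ 0) : Γ.outDeg u ≠ 0 := by
  obtain ⟨⟨_, v⟩, hmem⟩ := Finset.card_ne_zero.mp hu
  obtain ⟨huv, rfl⟩ := Finset.mem_filter.mp hmem
  obtain ⟨w, huw, -⟩ := Relation.TransGen.head'_iff.mp (hΓ.2.2 _ huv)
  exact Finset.card_ne_zero.mpr ⟨_, Finset.mem_filter.mpr ⟨huw, rfl⟩⟩

end Digr

theorem stmt13_general {V : Type} [DecidableEq V] (D Γ : Digr V)
    (hcan : Canonical D Γ) :
    Γ.leaves = D.leaves ∧ ∀ v ∈ Γ.verts, Γ.outDeg v ≤ D.outDeg v := by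
  have hverts : Γ.verts = D.verts := hcan.1.2.1
  refine ⟨Set.Subset.antisymm ?_ ?_, fun v _ => hcan.outDeg_le v⟩
  · rintro v ⟨hv, hΓv⟩
    exact ⟨hverts ▸ hv, not_not.mp fun hDv => hcan.1.outDeg_ne_zero hDv hΓv⟩
  · rintro v ⟨hv, hDv⟩
    exact ⟨hverts ▸ hv, Nat.eq_zero_of_le_zero (hDv ▸ hcan.outDeg_le v)⟩

/-- a canonical tree extension has the same leaves as `D` and no
larger out-degrees. -/
theorem stmt13 {V : Type} [DecidableEq V] (D Γ : Digr V)
    (hD : D.RootedConn) (hcan : Canonical D Γ) :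
    Γ.leaves = D.leaves ∧ ∀ v ∈ Γ.verts, Γ.outDeg v ≤ D.outDeg v :=
  stmt13_general D Γ hcan
end

section
/- Every level-c binary phylogenetic network has scanwidth at most c + 1. -/
open Digr

/-!
Number the vertices topologically by `σ` and let the cone of `t` be the weak component of `t`
among the vertices numbered at least `σ t`. Cones are laminar, and their Hasse diagram is a tree
extension in which the descendants of `t` form exactly its cone. Hence the arcs counted at `t`
enter a successor-closed, weakly connected set `S`.

Fix one such arc `a₀`. Every other entering arc `a` closes a cycle with `a₀` (inside `S` from head
to head, outside `S` from tail to tail through the root), so all these cycles lie in the block of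
`a₀`. In their union the arcs other than the entering ones already connect all vertices, while
summing in-degrees bounds the number of arcs by the number of vertices minus one plus the number
of reticulations. Comparing the two counts, each entering arc besides `a₀` is paid for by a
reticulation of the block, so at most `c + 1` arcs enter `S`.
-/

namespace Digr

variable {V : Type}

open SimpleGraph

def arcGraph (A : Set (V × V)) : SimpleGraph V := SimpleGraph.fromRel fun u v => (u, v) ∈ A

def arcsWithin (N : Digr V) (U : Set V) : Set (V × V) := {f | f ∈ N.arcs ∧ f.1 ∈ U ∧ f.2 ∈ U}

open Classical in
noncomputable def inArcs (N : Digr V) (S : Set V) : Finset (V × V) :=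
  N.arcs.filter fun f => f.1 ∉ S ∧ f.2 ∈ S

lemma mem_inArcs {N : Digr V} {S : Set V} {f : V × V} :
    f ∈ N.inArcs S ↔ f ∈ N.arcs ∧ f.1 ∉ S ∧ f.2 ∈ S := by
  classical
  rw [inArcs, Finset.mem_filter]

lemma arcGraph_adj {A : Set (V × V)} {u v : V} :
    (arcGraph A).Adj u v ↔ u ≠ v ∧ ((u, v) ∈ A ∨ (v, u) ∈ A) :=
  fromRel_adj _ u v

lemma arcGraph_mono {A B : Set (V × V)} (h : A ⊆ B) : arcGraph A ≤ arcGraph B := by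
  intro u v huv
  rw [arcGraph_adj] at huv ⊢
  exact ⟨huv.1, huv.2.imp (@h _) (@h _)⟩

lemma arcGraph_adj_of_mem {N : Digr V} {A : Set (V × V)} {f : V × V} (hfN : f ∈ N.arcs)
    (hf : f ∈ A) : (arcGraph A).Adj f.1 f.2 :=
  arcGraph_adj.2 ⟨(N.arc_mem f hfN).2.2, Or.inl hf⟩

lemma mk_mem_edgeSet_underSG {N : Digr V} {f : V × V} (hf : f ∈ N.arcs) :
    s(f.1, f.2) ∈ (underSG N).edgeSet :=
  show (arcGraph ↑N.arcs).Adj f.1 f.2 from arcGraph_adj_of_mem hf (Finset.mem_coe.2 hf)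

lemma exists_eq_of_mem_edgeSet {A : Set (V × V)} {e : Sym2 V}
    (he : e ∈ (arcGraph A).edgeSet) : ∃ f ∈ A, e = s(f.1, f.2) := by
  induction e using Sym2.ind with
  | _ u v =>
    rcases (arcGraph_adj.1 he).2 with h | h
    · exact ⟨_, h, rfl⟩
    · exact ⟨_, h, Sym2.eq_swap⟩

lemma mem_of_mk_mem_edgeSet {N : Digr V} (hacyc : N.Acyclic) {A : Set (V × V)}
    (hA : A ⊆ ↑N.arcs) {f : V × V} (hf : f ∈ N.arcs)
    (he : s(f.1, f.2) ∈ (arcGraph A).edgeSet) : f ∈ A := by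
  obtain ⟨g, hg, hfg⟩ := exists_eq_of_mem_edgeSet he
  rcases Sym2.eq_iff.1 hfg with ⟨h1, h2⟩ | ⟨h1, h2⟩
  · rwa [Prod.ext h1 h2]
  · have hg' : (f.2, f.1) ∈ N.arcs := by rw [h1, h2]; exact hA hg
    exact absurd (Relation.TransGen.head hf (Relation.TransGen.single hg')) (hacyc f.1)

lemma mem_of_reachable_arcsWithin {N : Digr V} {U : Set V} {t v : V}
    (h : (arcGraph (N.arcsWithin U)).Reachable t v) (hne : t ≠ v) :
    v ∈ N.verts ∧ v ∈ U := by
  rw [reachable_iff_reflTransGen] at h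
  rcases h.cases_tail with rfl | ⟨b, -, hbv⟩
  · exact absurd rfl hne
  · rcases (arcGraph_adj.1 hbv).2 with ⟨hf, -, hv⟩ | ⟨hf, hv, -⟩
    · exact ⟨(N.arc_mem _ hf).2.1, hv⟩
    · exact ⟨(N.arc_mem _ hf).1, hv⟩

lemma reachable_arcsWithin_reachableSet {N : Digr V} {U : Set V} {t v : V}
    (h : (arcGraph (N.arcsWithin U)).Reachable t v) :
    (arcGraph (N.arcsWithin {w | (arcGraph (N.arcsWithin U)).Reachable t w})).Reachable t v := by
  rw [reachable_iff_reflTransGen] at h ⊢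
  induction h with
  | refl => exact .refl
  | @tail b c htb hbc ih =>
    have hb : (arcGraph (N.arcsWithin U)).Reachable t b := (reachable_iff_reflTransGen _ _).2 htb
    have hc := hb.trans hbc.reachable
    refine ih.tail (arcGraph_adj.2 ⟨hbc.ne, ?_⟩)
    rcases (arcGraph_adj.1 hbc).2 with ⟨hf, -⟩ | ⟨hf, -⟩
    · exact Or.inl ⟨hf, hb, hc⟩
    · exact Or.inr ⟨hf, hc, hb⟩

section Ancestors

open Classical in
noncomputable def ancestorCount (N : Digr V) (v : V) : ℕ := (N.verts.filter (N.SReach · v)).card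

lemma ancestorCount_lt {N : Digr V} (hacyc : N.Acyclic) {u v : V} (h : (u, v) ∈ N.arcs) :
    N.ancestorCount u < N.ancestorCount v := by
  classical
  refine Finset.card_lt_card ⟨fun x hx => ?_, fun hsub => ?_⟩
  · rw [Finset.mem_filter] at hx ⊢
    exact ⟨hx.1, hx.2.tail h⟩
  · have hu := hsub (Finset.mem_filter.2 ⟨(N.arc_mem _ h).1, .single h⟩)
    exact hacyc u (Finset.mem_filter.1 hu).2

variable [DecidableEq V]

lemma exists_arc_of_not_isRoot {N : Digr V} {v : V} (hv : v ∈ N.verts) (hroot : ¬ N.IsRoot v) :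
    ∃ u, (u, v) ∈ N.arcs := by
  obtain ⟨f, hf⟩ := Finset.card_ne_zero.1 fun h => hroot ⟨hv, h⟩
  obtain ⟨hfN, rfl⟩ := Finset.mem_filter.1 hf
  exact ⟨f.1, hfN⟩

lemma reach_of_isRoot_unique {N : Digr V} (hacyc : N.Acyclic) {ρ : V}
    (huniq : ∀ r, N.IsRoot r → r = ρ) {v : V} (hv : v ∈ N.verts) : N.Reach ρ v := by
  induction hn : N.ancestorCount v using Nat.strong_induction_on generalizing v with
  | _ n ih =>
    by_cases hroot : N.IsRoot v
    · rw [huniq v hroot]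
      exact .refl
    · obtain ⟨u, hu⟩ := exists_arc_of_not_isRoot hv hroot
      exact (ih _ (hn ▸ ancestorCount_lt hacyc hu) (N.arc_mem _ hu).1 rfl).tail hu

/-- Number by ancestor count, breaking ties by position in `N.verts`. -/
lemma exists_topologicalNumbering {N : Digr V} (hacyc : N.Acyclic) :
    ∃ σ : V → ℕ, Set.InjOn σ N.verts ∧ ∀ f ∈ N.arcs, σ f.1 < σ f.2 := by
  set M := N.verts.card
  set pos : V → ℕ := fun v => N.verts.toList.idxOf v
  have hpos : ∀ v ∈ N.verts, pos v < M := fun v hv => by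
    simpa [pos, M] using List.idxOf_lt_length_of_mem (Finset.mem_toList.2 hv)
  refine ⟨fun v => pos v + M * N.ancestorCount v, fun u hu v hv huv => ?_, fun f hf => ?_⟩
  · have hmod := congrArg (· % M) huv
    simp only [Nat.add_mul_mod_self_left, Nat.mod_eq_of_lt (hpos u hu),
      Nat.mod_eq_of_lt (hpos v hv)] at hmod
    exact (List.idxOf_inj (Finset.mem_toList.2 hu)).1 hmod
  · have h1 := ancestorCount_lt hacyc hf
    have h2 := Nat.mul_le_mul_left M h1
    have h3 := hpos _ (N.arc_mem f hf).1
    simp only [Nat.mul_succ] at h2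
    show pos f.1 + M * _ < pos f.2 + M * _
    omega

end Ancestors

section TreeExtension

variable (N : Digr V) (σ : V → ℕ)

def cone (t : V) : Set V := {v | (arcGraph (N.arcsWithin {w | σ t ≤ σ w})).Reachable t v}

variable {N σ}

lemma mem_cone_self (t : V) : t ∈ N.cone σ t := Reachable.refl _

lemma mem_cone_of_arc (hσ : ∀ f ∈ N.arcs, σ f.1 < σ f.2) {f : V × V} (hf : f ∈ N.arcs) :
    f.2 ∈ N.cone σ f.1 :=
  (arcGraph_adj_of_mem (A := N.arcsWithin {w | σ f.1 ≤ σ w}) hf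
    ⟨hf, le_refl (σ f.1), (hσ f hf).le⟩).reachable

lemma mem_verts_and_le_of_mem_cone {t v : V} (ht : t ∈ N.verts) (hv : v ∈ N.cone σ t) :
    v ∈ N.verts ∧ σ t ≤ σ v := by
  rcases eq_or_ne t v with rfl | hne
  · exact ⟨ht, le_rfl⟩
  · exact mem_of_reachable_arcsWithin hv hne

lemma cone_subset_cone {t u w : V} (htu : σ t ≤ σ u) (hwt : w ∈ N.cone σ t)
    (hwu : w ∈ N.cone σ u) : N.cone σ u ⊆ N.cone σ t := by
  have hmono : arcGraph (N.arcsWithin {x | σ u ≤ σ x}) ≤ arcGraph (N.arcsWithin {x | σ t ≤ σ x}) :=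
    arcGraph_mono fun f ⟨hf, h1, h2⟩ => ⟨hf, htu.trans h1, htu.trans h2⟩
  intro x hx
  exact (hwt.trans (hwu.mono hmono).symm).trans (hx.mono hmono)

lemma mem_cone_of_mem_cone_of_arc (hσ : ∀ f ∈ N.arcs, σ f.1 < σ f.2) {t : V} (ht : t ∈ N.verts)
    {f : V × V} (hf : f ∈ N.arcs) (h1 : f.1 ∈ N.cone σ t) : f.2 ∈ N.cone σ t :=
  cone_subset_cone (mem_verts_and_le_of_mem_cone ht h1).2 h1 (mem_cone_self f.1) (mem_cone_of_arc hσ hf)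

lemma reachable_within_cone {t u v : V} (hu : u ∈ N.cone σ t) (hv : v ∈ N.cone σ t) :
    (arcGraph (N.arcsWithin (N.cone σ t))).Reachable u v :=
  (reachable_arcsWithin_reachableSet hu).symm.trans (reachable_arcsWithin_reachableSet hv)

variable (N σ)

open Classical in
/-- The Hasse diagram of the cones, ordered by inclusion. -/
noncomputable def coneArcs : Finset (V × V) :=
  (N.verts ×ˢ N.verts).filter fun p => σ p.1 < σ p.2 ∧ p.2 ∈ N.cone σ p.1 ∧
    ∀ w ∈ N.verts, σ p.1 < σ w → σ w < σ p.2 → p.2 ∉ N.cone σ w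

variable {N σ}

lemma mem_coneArcs {p : V × V} : p ∈ N.coneArcs σ ↔ (p.1 ∈ N.verts ∧ p.2 ∈ N.verts) ∧
    σ p.1 < σ p.2 ∧ p.2 ∈ N.cone σ p.1 ∧
      ∀ w ∈ N.verts, σ p.1 < σ w → σ w < σ p.2 → p.2 ∉ N.cone σ w := by
  classical
  rw [coneArcs, Finset.mem_filter, Finset.mem_product]

variable (N σ)

noncomputable def coneTree : Digr V where
  verts := N.verts
  arcs := N.coneArcs σ
  arc_mem f hf := by
    obtain ⟨hV, hlt, -⟩ := mem_coneArcs.1 hf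
    exact ⟨hV.1, hV.2, fun h => hlt.ne (h ▸ rfl)⟩

variable {N σ}

lemma lt_of_sReach_coneTree {u v : V} (h : (N.coneTree σ).SReach u v) : σ u < σ v := by
  induction h with
  | single h => exact (mem_coneArcs.1 h).2.1
  | tail _ h ih => exact ih.trans (mem_coneArcs.1 h).2.1

lemma coneTree_acyclic : (N.coneTree σ).Acyclic := fun _ h => (lt_of_sReach_coneTree h).false

lemma mem_cone_of_reach_coneTree {t v : V} (ht : t ∈ N.verts) (h : (N.coneTree σ).Reach t v) :
    v ∈ N.cone σ t := by
  induction h with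
  | refl => exact mem_cone_self t
  | @tail b c _ hbc ih =>
    obtain ⟨-, -, hc, -⟩ := mem_coneArcs.1 hbc
    exact cone_subset_cone (mem_verts_and_le_of_mem_cone ht ih).2 ih (mem_cone_self b) hc

/-- The tree parent of `v` is the vertex of largest number below `v` whose cone contains `v`. -/
lemma reach_coneTree_of_mem_cone (hinj : Set.InjOn σ N.verts) {t v : V} (ht : t ∈ N.verts)
    (hv : v ∈ N.cone σ t) : (N.coneTree σ).Reach t v := by
  classical
  induction hn : σ v using Nat.strong_induction_on generalizing v with
  | _ n ih =>
    obtain ⟨hvV, htv⟩ := mem_verts_and_le_of_mem_cone ht hv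
    rcases eq_or_ne t v with rfl | hne
    · exact .refl
    have htv' : σ t < σ v := htv.lt_of_ne fun h => hne (hinj ht hvV h)
    set cands := N.verts.filter fun u => σ t ≤ σ u ∧ σ u < σ v ∧ v ∈ N.cone σ u
    obtain ⟨p, hp, hpmax⟩ := cands.exists_max_image σ
      ⟨t, Finset.mem_filter.2 ⟨ht, le_rfl, htv', hv⟩⟩
    obtain ⟨hpV, htp, hpv, hvp⟩ := Finset.mem_filter.1 hp
    have harc : (p, v) ∈ N.coneArcs σ := by
      refine mem_coneArcs.2 ⟨⟨hpV, hvV⟩, hpv, hvp, ?_⟩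
      intro w hwV hpw hwv hvw
      exact (hpmax w (Finset.mem_filter.2 ⟨hwV, htp.trans hpw.le, hwv, hvw⟩)).not_gt hpw
    have hpt : p ∈ N.cone σ t := cone_subset_cone htp hv hvp (mem_cone_self p)
    exact (ih _ (hn ▸ hpv) hpt rfl).tail harc

lemma reach_coneTree_iff (hinj : Set.InjOn σ N.verts) {t v : V} (ht : t ∈ N.verts) :
    (N.coneTree σ).Reach t v ↔ v ∈ N.cone σ t :=
  ⟨mem_cone_of_reach_coneTree ht, reach_coneTree_of_mem_cone hinj ht⟩

lemma le_of_reach (hσ : ∀ f ∈ N.arcs, σ f.1 < σ f.2) {u v : V} (h : N.Reach u v) : σ u ≤ σ v := by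
  induction h with
  | refl => exact le_rfl
  | tail _ hbc ih => exact ih.trans (hσ _ hbc).le

lemma mem_cone_of_reach (hσ : ∀ f ∈ N.arcs, σ f.1 < σ f.2) {u v : V} (h : N.Reach u v) :
    v ∈ N.cone σ u := by
  induction h with
  | refl => exact mem_cone_self u
  | @tail b c hub hbc ih =>
    have hub' := le_of_reach hσ hub
    exact ih.trans (arcGraph_adj_of_mem (A := N.arcsWithin {w | σ u ≤ σ w}) hbc
      ⟨hbc, hub', hub'.trans (hσ _ hbc).le⟩).reachable

lemma gw_coneTree_subset_inArcs (hinj : Set.InjOn σ N.verts) {t : V} (ht : t ∈ N.verts) :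
    GW N (N.coneTree σ) t ⊆ ↑(N.inArcs (N.cone σ t)) := by
  rintro f ⟨hf, hf1t, htf2⟩
  refine mem_inArcs.2 ⟨hf, fun hf1 => ?_, (reach_coneTree_iff hinj ht).1 htf2⟩
  exact coneTree_acyclic _ (hf1t.trans_left (reach_coneTree_of_mem_cone hinj ht hf1))

variable [DecidableEq V]

lemma isRoot_coneTree (hσ : ∀ f ∈ N.arcs, σ f.1 < σ f.2) {ρ : V} (hρ : ρ ∈ N.verts)
    (hreach : ∀ v ∈ N.verts, N.Reach ρ v) : (N.coneTree σ).IsRoot ρ := by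
  refine ⟨hρ, Finset.card_eq_zero.2 (Finset.filter_eq_empty_iff.2 fun f hf hfρ => ?_)⟩
  obtain ⟨⟨hf1, -⟩, hlt, -⟩ := mem_coneArcs.1 hf
  exact (hfρ ▸ hlt).not_ge (le_of_reach hσ (hreach _ hf1))

lemma eq_of_isRoot_coneTree (hσ : ∀ f ∈ N.arcs, σ f.1 < σ f.2) (hinj : Set.InjOn σ N.verts)
    {ρ : V} (hρ : ρ ∈ N.verts) (hreach : ∀ v ∈ N.verts, N.Reach ρ v) {r : V}
    (hr : (N.coneTree σ).IsRoot r) : r = ρ := by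
  have h := reach_coneTree_of_mem_cone hinj hρ (mem_cone_of_reach hσ (hreach r hr.1))
  rcases h.cases_tail with h | ⟨b, -, hbr⟩
  · exact h
  · exact absurd hr.2 (Finset.card_ne_zero.2 ⟨(b, r), Finset.mem_filter.2 ⟨hbr, rfl⟩⟩)

lemma inDeg_coneTree_le_one (hinj : Set.InjOn σ N.verts) (v : V) :
    (N.coneTree σ).inDeg v ≤ 1 := by
  suffices key : ∀ a ∈ N.coneArcs σ, ∀ b ∈ N.coneArcs σ, a.2 = b.2 → ¬ σ a.1 < σ b.1 by
    refine Finset.card_le_one.2 fun a ha b hb => ?_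
    obtain ⟨ha', rfl⟩ := Finset.mem_filter.1 ha
    obtain ⟨hb', hab⟩ := Finset.mem_filter.1 hb
    have hσab : σ a.1 = σ b.1 :=
      le_antisymm (not_lt.1 (key b hb' a ha' hab)) (not_lt.1 (key a ha' b hb' hab.symm))
    exact Prod.ext (hinj (mem_coneArcs.1 ha').1.1 (mem_coneArcs.1 hb').1.1 hσab) hab.symm
  intro a ha b hb hab hlt
  obtain ⟨-, -, -, hamin⟩ := mem_coneArcs.1 ha
  obtain ⟨⟨hb1, -⟩, hblt, hbv, -⟩ := mem_coneArcs.1 hb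
  exact hamin b.1 hb1 hlt (hab ▸ hblt) (hab ▸ hbv)

lemma isTreeExt_coneTree (hσ : ∀ f ∈ N.arcs, σ f.1 < σ f.2) (hinj : Set.InjOn σ N.verts)
    {ρ : V} (hρ : ρ ∈ N.verts) (hreach : ∀ v ∈ N.verts, N.Reach ρ v) :
    IsTreeExt N (N.coneTree σ) := by
  refine ⟨⟨⟨coneTree_acyclic, ρ, isRoot_coneTree hσ hρ hreach,
    fun r hr => eq_of_isRoot_coneTree hσ hinj hρ hreach hr⟩,
    fun v _ => inDeg_coneTree_le_one hinj v⟩, rfl, fun f hf => ?_⟩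
  have h := reach_coneTree_of_mem_cone hinj (N.arc_mem f hf).1 (mem_cone_of_arc hσ hf)
  exact (Relation.reflTransGen_iff_eq_or_transGen.1 h).resolve_left (N.arc_mem f hf).2.2.symm

end TreeExtension

section Counting

/-- Sending every vertex other than `x₀` to the edge towards a neighbour closer to `x₀` is
injective. -/
lemma card_le_card_add_one_of_reachable {F : Finset (V × V)} {X : Finset V} {x₀ : V}
    (hX : ∀ x ∈ X, (arcGraph ↑F).Reachable x x₀) : X.card ≤ F.card + 1 := by
  classical
  set G := arcGraph (↑F : Set (V × V))
  have hstep : ∀ x, ∃ y, x ∈ X.erase x₀ → G.Adj x y ∧ G.dist y x₀ < G.dist x x₀ := by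
    intro x
    by_cases hx : x ∈ X.erase x₀
    · obtain ⟨p, hp⟩ := (hX x (Finset.mem_of_mem_erase hx)).exists_walk_length_eq_dist
      cases p with
      | nil => exact absurd rfl (Finset.ne_of_mem_erase hx)
      | cons h q =>
        refine ⟨_, fun _ => ⟨h, ?_⟩⟩
        have := SimpleGraph.dist_le q
        rw [Walk.length_cons] at hp
        omega
    · exact ⟨x, fun h => absurd h hx⟩
  choose nb hnb using hstep
  have hinj : (X.erase x₀).card ≤ (F.image fun f => s(f.1, f.2)).card := by
    refine Finset.card_le_card_of_injOn (fun x => s(x, nb x)) (fun x hx => ?_) ?_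
    · rcases (arcGraph_adj.1 (hnb x hx).1).2 with h | h
      · exact Finset.mem_image.2 ⟨_, h, rfl⟩
      · exact Finset.mem_image.2 ⟨_, h, Sym2.eq_swap⟩
    · intro x hx y hy hxy
      rcases Sym2.eq_iff.1 hxy with ⟨h, -⟩ | ⟨h1, h2⟩
      · exact h
      · have hx' := (hnb x hx).2
        have hy' := (hnb y hy).2
        rw [h2] at hx'
        rw [← h1] at hy'
        omega
  have := Finset.card_image_le (s := F) (f := fun f => s(f.1, f.2))
  have := Finset.pred_card_le_card_erase (s := X) (a := x₀)
  omega

variable [DecidableEq V]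

def endpoints (A : Finset (V × V)) : Finset V := A.biUnion fun f => {f.1, f.2}

def reticulationsIn (A : Finset (V × V)) : Finset V :=
  (endpoints A).filter fun v => 2 ≤ (A.filter fun f => f.2 = v).card

lemma mem_endpoints {A : Finset (V × V)} {x : V} :
    x ∈ endpoints A ↔ ∃ f ∈ A, x = f.1 ∨ x = f.2 := by
  simp [endpoints]

/-- Summing in-degrees within `A`: every vertex takes at most one arc, plus one more if it is a
reticulation, and a vertex without ancestors takes none. -/
lemma card_add_one_le_card_endpoints_add {N : Digr V} (hacyc : N.Acyclic)
    (hin : ∀ v ∈ N.verts, N.inDeg v ≤ 2) {A : Finset (V × V)} (hA : A ⊆ N.arcs)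
    (hne : A.Nonempty) : A.card + 1 ≤ (endpoints A).card + (reticulationsIn A).card := by
  set E := endpoints A
  set d : V → ℕ := fun v => (A.filter fun f => f.2 = v).card
  have hsum : A.card = ∑ v ∈ E, d v :=
    Finset.card_eq_sum_card_fiberwise fun f hf => mem_endpoints.2 ⟨f, hf, Or.inr rfl⟩
  obtain ⟨f₀, hf₀⟩ := hne
  obtain ⟨m, hm, hmin⟩ := E.exists_min_image N.ancestorCount
    ⟨f₀.1, mem_endpoints.2 ⟨f₀, hf₀, Or.inl rfl⟩⟩
  have hdm : d m = 0 := Finset.card_eq_zero.2 <| Finset.filter_eq_empty_iff.2 fun f hf hfm =>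
    (hmin f.1 (mem_endpoints.2 ⟨f, hf, Or.inl rfl⟩)).not_gt
      (hfm ▸ ancestorCount_lt hacyc (hA hf))
  have hd : ∀ v ∈ E, d v + (if v = m then 1 else 0) ≤ 1 + (if 2 ≤ d v then 1 else 0) := by
    intro v hv
    have hdv : d v ≤ 2 := by
      obtain ⟨f, hf, hvf⟩ := mem_endpoints.1 hv
      have hvV : v ∈ N.verts := by
        rcases hvf with rfl | rfl
        exacts [(N.arc_mem f (hA hf)).1, (N.arc_mem f (hA hf)).2.1]
      exact (Finset.card_le_card (Finset.filter_subset_filter _ hA)).trans (hin v hvV)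
    by_cases hvm : v = m
    · simp [hvm, hdm]
    · simp only [hvm, if_false]
      split_ifs <;> omega
  calc A.card + 1 = ∑ v ∈ E, (d v + if v = m then 1 else 0) := by
        rw [Finset.sum_add_distrib, Finset.sum_ite_eq' E m, if_pos hm, hsum]
    _ ≤ ∑ v ∈ E, (1 + if 2 ≤ d v then 1 else 0) := Finset.sum_le_sum hd
    _ = E.card + (reticulationsIn A).card := by
        rw [Finset.sum_add_distrib, reticulationsIn, Finset.card_filter]
        simp [E, d]

lemma exists_arc_of_mem_reticulationsIn {N : Digr V} {A : Finset (V × V)} (hA : A ⊆ N.arcs)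
    {v : V} (hv : v ∈ reticulationsIn A) : IsReticulation N v ∧ ∃ g ∈ A, g.2 = v := by
  obtain ⟨-, h2⟩ := Finset.mem_filter.1 hv
  obtain ⟨g, hg⟩ := Finset.card_pos.1 (by omega : 0 < (A.filter fun f => f.2 = v).card)
  obtain ⟨hgA, rfl⟩ := Finset.mem_filter.1 hg
  exact ⟨⟨(N.arc_mem g (hA hgA)).2.1,
    h2.trans (Finset.card_le_card (Finset.filter_subset_filter _ hA))⟩, g, hgA, rfl⟩

lemma card_le_card_reticulationsIn {N : Digr V} (hacyc : N.Acyclic)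
    (hin : ∀ v ∈ N.verts, N.inDeg v ≤ 2) {F K : Finset (V × V)} (hF : F ⊆ N.arcs)
    (hK : K ⊆ N.arcs) (hFK : Disjoint F K) {x₀ : V}
    (hreach : ∀ x ∈ endpoints (F ∪ K), (arcGraph ↑F).Reachable x x₀) :
    K.card ≤ (reticulationsIn (F ∪ K)).card := by
  rcases (F ∪ K).eq_empty_or_nonempty with hempty | hne
  · simp [Finset.union_eq_empty.1 hempty]
  have hupper := card_add_one_le_card_endpoints_add hacyc hin (Finset.union_subset hF hK) hne
  have hlower := card_le_card_add_one_of_reachable hreach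
  rw [Finset.card_union_of_disjoint hFK] at hupper
  omega

end Counting

section CutBound

variable {N : Digr V} {S : Set V}

lemma reachable_compl_of_reach (hS : ∀ f ∈ N.arcs, f.1 ∈ S → f.2 ∈ S) {u v : V}
    (h : N.Reach u v) (hv : v ∉ S) : (arcGraph (N.arcsWithin Sᶜ)).Reachable u v := by
  induction h with
  | refl => exact .refl _
  | @tail b c _ hbc ih =>
    have hb : b ∉ S := fun hb => hv (hS _ hbc hb)
    exact (ih hb).trans (arcGraph_adj_of_mem (A := N.arcsWithin Sᶜ) hbc ⟨hbc, hb, hv⟩).reachable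

lemma sameBlock_of_mem_cycle (hacyc : N.Acyclic) {A : Set (V × V)} (hA : A ⊆ ↑N.arcs)
    {a : V × V} (ha : a ∈ N.arcs) (haA : a ∉ A) {p : (arcGraph A).Walk a.2 a.1} (hp : p.IsPath)
    {e f : Sym2 V} (he : e ∈ s(a.1, a.2) :: p.edges) (hf : f ∈ s(a.1, a.2) :: p.edges) :
    SameBlock N e f := by
  have hle : arcGraph A ≤ underSG N := arcGraph_mono hA
  have hadj : (underSG N).Adj a.1 a.2 := mk_mem_edgeSet_underSG ha
  have hnot : s(a.1, a.2) ∉ (p.mapLe hle).edges := by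
    rw [Walk.edges_mapLe_eq_edges]
    exact fun h => haA (mem_of_mk_mem_edgeSet hacyc hA ha (p.edges_subset_edgeSet h))
  have hC := Path.cons_isCycle ⟨p.mapLe hle, hp.mapLe hle⟩ hadj hnot
  refine Or.inr ⟨a.1, _, hC, ?_, ?_⟩ <;>
    simpa only [Walk.edges_cons, Walk.edges_mapLe_eq_edges]

variable [DecidableEq V]

/-- Walk inside `S` from `a.2` to `a₀.2`, back along `a₀`, and outside `S` from `a₀.1` to `a.1`.
The only arc of this walk entering `S` is `a₀`, so the path it contains still crosses `a₀`. -/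
lemma exists_isPath_through_inArc (hS : ∀ f ∈ N.arcs, f.1 ∈ S → f.2 ∈ S)
    (hin : ∀ u ∈ S, ∀ v ∈ S, (arcGraph (N.arcsWithin S)).Reachable u v)
    (hout : ∀ u ∈ N.verts, u ∉ S → ∀ v ∈ N.verts, v ∉ S →
      (arcGraph (N.arcsWithin Sᶜ)).Reachable u v)
    {a₀ a : V × V} (ha₀ : a₀ ∈ N.inArcs S) (ha : a ∈ N.inArcs S) :
    ∃ p : (arcGraph ↑(N.arcs \ (N.inArcs S).erase a₀)).Walk a.2 a.1,
      p.IsPath ∧ s(a₀.1, a₀.2) ∈ p.edges := by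
  obtain ⟨ha₀N, ha₀1, ha₀2⟩ := mem_inArcs.1 ha₀
  obtain ⟨haN, ha1, ha2⟩ := mem_inArcs.1 ha
  have hinside : arcGraph (N.arcsWithin S) ≤ arcGraph ↑(N.arcs \ (N.inArcs S).erase a₀) :=
    arcGraph_mono fun f ⟨hf, hf1, _⟩ => Finset.mem_sdiff.2
      ⟨hf, fun h => (mem_inArcs.1 (Finset.mem_of_mem_erase h)).2.1 hf1⟩
  have houtside : arcGraph (N.arcsWithin Sᶜ) ≤ arcGraph ↑(N.arcs \ (N.inArcs S).erase a₀) :=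
    arcGraph_mono fun f ⟨hf, _, hf2⟩ => Finset.mem_sdiff.2
      ⟨hf, fun h => hf2 (mem_inArcs.1 (Finset.mem_of_mem_erase h)).2.2⟩
  obtain ⟨w₁⟩ := (hin a.2 ha2 a₀.2 ha₀2).mono hinside
  obtain ⟨w₂⟩ := (hout a₀.1 (N.arc_mem _ ha₀N).1 ha₀1 a.1 (N.arc_mem _ haN).1 ha1).mono houtside
  have hcross := arcGraph_adj_of_mem (A := ↑(N.arcs \ (N.inArcs S).erase a₀)) ha₀N
    (Finset.mem_sdiff.2 ⟨ha₀N, fun h => (Finset.mem_erase.1 h).1 rfl⟩)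
  set p := (w₁.append (.cons hcross.symm w₂)).bypass
  refine ⟨p, Walk.bypass_isPath _, ?_⟩
  obtain ⟨d, hd, hd1, hd2⟩ := p.exists_boundary_dart S ha2 ha1
  rcases (arcGraph_adj.1 d.adj).2 with h | h
  · exact absurd (hS _ (Finset.mem_sdiff.1 h).1 hd1) hd2
  · have hd₀ : (d.snd, d.fst) = a₀ := by
      by_contra hne
      exact (Finset.mem_sdiff.1 h).2
        (Finset.mem_erase.2 ⟨hne, mem_inArcs.2 ⟨(Finset.mem_sdiff.1 h).1, hd2, hd1⟩⟩)
    have hedge : d.edge = s(a₀.1, a₀.2) := by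
      obtain ⟨h1, h2⟩ := Prod.ext_iff.1 hd₀
      rw [← h1, ← h2]
      exact Sym2.eq_swap
    exact hedge ▸ List.mem_map_of_mem hd

lemma LevelAtMost.card_le {c : ℕ} (hlev : LevelAtMost N c) {e : Sym2 V}
    (he : e ∈ (underSG N).edgeSet) {R : Finset V}
    (hR : ∀ v ∈ R, IsReticulation N v ∧ ∃ f ∈ (underSG N).edgeSet, SameBlock N e f ∧ v ∈ f) :
    R.card ≤ c := by
  rw [← Set.ncard_coe_finset]
  exact (Set.ncard_le_ncard hR (N.verts.finite_toSet.subset fun v hv => hv.1.1)).trans (hlev e he)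

section PathFamily

variable {Q : Set (V × V)} {K : Finset (V × V)} (N)

open Classical in
def pathArcs (P : ∀ a ∈ K, (arcGraph Q).Walk a.2 a.1) : Finset (V × V) :=
  N.arcs.filter fun f => ∃ a, ∃ ha : a ∈ K, s(f.1, f.2) ∈ (P a ha).edges

variable {N}

lemma mem_pathArcs {P : ∀ a ∈ K, (arcGraph Q).Walk a.2 a.1} {f : V × V} :
    f ∈ pathArcs N P ↔ f ∈ N.arcs ∧ ∃ a, ∃ ha : a ∈ K, s(f.1, f.2) ∈ (P a ha).edges := by
  rw [pathArcs, Finset.mem_filter]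

lemma disjoint_pathArcs (hacyc : N.Acyclic) (hQ : Q ⊆ ↑N.arcs) (hKQ : ∀ a ∈ K, a ∉ Q)
    (P : ∀ a ∈ K, (arcGraph Q).Walk a.2 a.1) : Disjoint (pathArcs N P) K := by
  refine Finset.disjoint_left.2 fun f hf hfK => hKQ f hfK ?_
  obtain ⟨hfN, a, ha, hfa⟩ := mem_pathArcs.1 hf
  exact mem_of_mk_mem_edgeSet hacyc hQ hfN ((P a ha).edges_subset_edgeSet hfa)

lemma reachable_of_mem_endpoints (hQ : Q ⊆ ↑N.arcs) (P : ∀ a ∈ K, (arcGraph Q).Walk a.2 a.1)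
    {x₀ : V} (hx₀ : ∀ a (ha : a ∈ K), x₀ ∈ (P a ha).support) {x : V}
    (hx : x ∈ endpoints (pathArcs N P ∪ K)) : (arcGraph ↑(pathArcs N P)).Reachable x x₀ := by
  have hsupp : ∃ a, ∃ ha : a ∈ K, x ∈ (P a ha).support := by
    obtain ⟨f, hf, hxf⟩ := mem_endpoints.1 hx
    rcases Finset.mem_union.1 hf with hf | hf
    · obtain ⟨-, a, ha, hfa⟩ := mem_pathArcs.1 hf
      refine ⟨a, ha, ?_⟩
      rcases hxf with rfl | rfl
      exacts [Walk.fst_mem_support_of_mem_edges _ hfa, Walk.snd_mem_support_of_mem_edges _ hfa]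
    · refine ⟨f, hf, ?_⟩
      rcases hxf with rfl | rfl
      exacts [Walk.end_mem_support _, Walk.start_mem_support _]
  obtain ⟨a, ha, hxa⟩ := hsupp
  have hedges : ∀ e ∈ (P a ha).edges, e ∈ (arcGraph ↑(pathArcs N P)).edgeSet := by
    intro e he
    obtain ⟨g, hg, rfl⟩ := exists_eq_of_mem_edgeSet ((P a ha).edges_subset_edgeSet he)
    exact arcGraph_adj_of_mem (hQ hg) (mem_pathArcs.2 ⟨hQ hg, a, ha, he⟩)
  set W := (P a ha).transfer _ hedges
  have hW : W.support = (P a ha).support := Walk.support_transfer _ _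
  have hfrom : ∀ y ∈ W.support, (arcGraph ↑(pathArcs N P)).Reachable a.2 y :=
    fun y hy => ⟨W.takeUntil y hy⟩
  exact (hfrom x (hW ▸ hxa)).symm.trans (hfrom x₀ (hW ▸ hx₀ a ha))

end PathFamily

lemma card_inArcs_le {c : ℕ} (hacyc : N.Acyclic) (hin : ∀ v ∈ N.verts, N.inDeg v ≤ 2)
    (hlev : LevelAtMost N c) {ρ : V} (hreach : ∀ v ∈ N.verts, N.Reach ρ v)
    (hS : ∀ f ∈ N.arcs, f.1 ∈ S → f.2 ∈ S)
    (hconn : ∀ u ∈ S, ∀ v ∈ S, (arcGraph (N.arcsWithin S)).Reachable u v) :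
    (N.inArcs S).card ≤ c + 1 := by
  obtain hempty | ⟨a₀, ha₀⟩ := (N.inArcs S).eq_empty_or_nonempty
  · simp [hempty]
  have ha₀N : a₀ ∈ N.arcs := (mem_inArcs.1 ha₀).1
  have hout : ∀ u ∈ N.verts, u ∉ S → ∀ v ∈ N.verts, v ∉ S →
      (arcGraph (N.arcsWithin Sᶜ)).Reachable u v := fun u hu huS v hv hvS =>
    (reachable_compl_of_reach hS (hreach u hu) huS).symm.trans
      (reachable_compl_of_reach hS (hreach v hv) hvS)
  set K := (N.inArcs S).erase a₀
  have hKN : K ⊆ N.arcs := fun a ha => (mem_inArcs.1 (Finset.mem_of_mem_erase ha)).1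
  have hQ : (↑(N.arcs \ K) : Set (V × V)) ⊆ ↑N.arcs := Finset.coe_subset.2 Finset.sdiff_subset
  have hKQ : ∀ a ∈ K, a ∉ (↑(N.arcs \ K) : Set (V × V)) := fun a ha h =>
    (Finset.mem_sdiff.1 h).2 ha
  have hpath := fun a (ha : a ∈ K) =>
    exists_isPath_through_inArc hS hconn hout ha₀ (Finset.mem_of_mem_erase ha)
  choose P hP ha₀P using hpath
  have hblock : ∀ f ∈ pathArcs N P ∪ K, SameBlock N s(a₀.1, a₀.2) s(f.1, f.2) := by
    intro f hf
    rcases Finset.mem_union.1 hf with hf | hf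
    · obtain ⟨-, a, ha, hfa⟩ := mem_pathArcs.1 hf
      exact sameBlock_of_mem_cycle hacyc hQ (hKN ha) (hKQ a ha) (hP a ha)
        (List.mem_cons_of_mem _ (ha₀P a ha)) (List.mem_cons_of_mem _ hfa)
    · exact sameBlock_of_mem_cycle hacyc hQ (hKN hf) (hKQ f hf) (hP f hf)
        (List.mem_cons_of_mem _ (ha₀P f hf)) List.mem_cons_self
  have hKc : K.card ≤ (reticulationsIn (pathArcs N P ∪ K)).card :=
    card_le_card_reticulationsIn hacyc hin (Finset.filter_subset _ _) hKN
      (disjoint_pathArcs hacyc hQ hKQ P)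
      (fun x hx => reachable_of_mem_endpoints hQ P
        (fun a ha => Walk.snd_mem_support_of_mem_edges _ (ha₀P a ha)) hx)
  have hRc : (reticulationsIn (pathArcs N P ∪ K)).card ≤ c := by
    refine hlev.card_le (mk_mem_edgeSet_underSG ha₀N) fun v hv => ?_
    obtain ⟨hret, g, hg, rfl⟩ :=
      exists_arc_of_mem_reticulationsIn (Finset.union_subset (Finset.filter_subset _ _) hKN) hv
    exact ⟨hret, _, mk_mem_edgeSet_underSG (Finset.union_subset (Finset.filter_subset _ _) hKN hg),
      hblock g hg, Sym2.mem_mk_right _ _⟩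
  have : K.card + 1 = (N.inArcs S).card := Finset.card_erase_add_one ha₀
  omega

end CutBound

end Digr

/-- a level-`c` binary phylogenetic network has scanwidth ≤ `c + 1`. -/
theorem stmt16 {V : Type} [DecidableEq V] (N : Digr V) (c : ℕ)
    (hN : N.IsNetwork) (hb : BinaryD N) (hlev : LevelAtMost N c) :
    N.scanwidth ≤ c + 1 := by
  obtain ⟨⟨hacyc, ρ, hρ, huniq⟩, -⟩ := hN
  have hreach : ∀ v ∈ N.verts, N.Reach ρ v := fun v hv => reach_of_isRoot_unique hacyc huniq hv
  have hin : ∀ v ∈ N.verts, N.inDeg v ≤ 2 := fun v hv => (hb v hv).1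
  obtain ⟨σ, hinj, hσ⟩ := exists_topologicalNumbering hacyc
  have hΓ : swOf N (N.coneTree σ) ∈ {k | ∃ Γ, IsTreeExt N Γ ∧ swOf N Γ = k} :=
    ⟨_, isTreeExt_coneTree hσ hinj hρ.1 hreach, rfl⟩
  refine (Nat.sInf_le hΓ).trans (Finset.sup_le fun t ht => ?_)
  calc (GW N (N.coneTree σ) t).ncard ≤ (N.inArcs (N.cone σ t)).card := by
        rw [← Set.ncard_coe_finset]
        exact Set.ncard_le_ncard (gw_coneTree_subset_inArcs hinj ht) (Finset.finite_toSet _)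
    _ ≤ c + 1 := card_inArcs_le hacyc hin hlev hreach
        (fun _ hf h1 => mem_cone_of_mem_cone_of_arc hσ ht hf h1)
        (fun _ hu _ hv => reachable_within_cone hu hv)
end

section
/- For every tree extension Γ of a rooted DAG D, there exists a canonical tree extension Γ' of D with sw_D(Γ') ≤ sw_D(Γ). -/
/-! Say that `v` is linked below `t` when `D` has a weak path from `t` to `v` all of whose
vertices are `Γ`-descendants of `t`. This relation refines `Γ`-reachability, so it is
antisymmetric; it is transitive; the vertices linked above a given vertex form a chain, because
its `Γ`-ancestors do; and since `D` is connected through its root, the root of `Γ` is linked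
above every vertex. Its Hasse diagram `Γ'` is therefore an out-tree whose reachability is
exactly this relation. Hence the vertices below `t` in `Γ'` induce a weakly connected subgraph
of `D`, every arc of `D` still joins an ancestor to a descendant, and, as reachability in `Γ'`
refines reachability in `Γ`, `GW_t(Γ') ⊆ GW_t(Γ)` for every `t`. -/

theorem Finset.card_filter_lt_card_filter {α : Type*} {s : Finset α} {p q : α → Prop}
    [DecidablePred p] [DecidablePred q] (hpq : ∀ x, p x → q x) {a : α} (ha : a ∈ s)
    (hqa : q a) (hpa : ¬p a) : (s.filter p).card < (s.filter q).card :=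
  Finset.card_lt_card <|
    (Finset.ssubset_iff_of_subset (Finset.monotone_filter_right s fun x _ => hpq x)).2
    ⟨a, Finset.mem_filter.2 ⟨ha, hqa⟩, fun h => hpa (Finset.mem_filter.1 h).2⟩

namespace Digr

variable {V : Type}

section Reachability

variable {D : Digr V} {r u v w : V}

lemma inDeg_eq_zero_iff [DecidableEq V] : D.inDeg v = 0 ↔ ∀ u, (u, v) ∉ D.arcs := by
  simp only [inDeg, Finset.card_eq_zero, Finset.filter_eq_empty_iff, Prod.forall]
  exact ⟨fun h u hu => h u v hu rfl, fun h u w huw hw => h u (hw ▸ huw)⟩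

lemma inDeg_le_one_iff [DecidableEq V] :
    D.inDeg v ≤ 1 ↔ ∀ u w, (u, v) ∈ D.arcs → (w, v) ∈ D.arcs → u = w := by
  simp only [inDeg, Finset.card_le_one, Finset.mem_filter, and_imp, Prod.forall, Prod.mk.injEq]
  constructor
  · intro h u w hu hw
    exact (h u v hu rfl w v hw rfl).1
  · rintro h u _ hu rfl w _ hw rfl
    exact ⟨h u w hu hw, rfl⟩

lemma sReach_of_reach_of_ne (h : D.Reach u v) (hne : u ≠ v) : D.SReach u v :=
  (Relation.reflTransGen_iff_eq_or_transGen.mp h).resolve_left hne.symm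

lemma Acyclic.eq_of_reach_of_reach (hD : D.Acyclic) (huv : D.Reach u v) (hvu : D.Reach v u) :
    u = v := by
  by_contra hne
  exact hD v (Relation.TransGen.trans_right hvu (sReach_of_reach_of_ne huv hne))

lemma IsOutTree.reach_or_reach [DecidableEq V] (hD : D.IsOutTree) (hu : D.Reach u w)
    (hv : D.Reach v w) : D.Reach u v ∨ D.Reach v u := by
  induction hu generalizing v with
  | refl => exact .inr hv
  | @tail c w huc hcw ih =>
    rcases Relation.ReflTransGen.cases_tail hv with rfl | ⟨p, hvp, hpw⟩
    · exact .inl (huc.tail hcw)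
    · have hpc : p = c :=
        inDeg_le_one_iff.1 (hD.2 w (D.arc_mem _ hcw).2.1) p c hpw hcw
      exact ih (hpc ▸ hvp)

lemma Rooted.reach_of_isRoot [DecidableEq V] (hD : D.Rooted) (hr : D.IsRoot r)
    (hv : v ∈ D.verts) : D.Reach r v := by
  classical
  induction hn : (D.verts.filter (D.SReach · v)).card using Nat.strong_induction_on
    generalizing v with
  | _ n ih =>
  by_cases h0 : D.inDeg v = 0
  · rw [hD.2.unique ⟨hv, h0⟩ hr]
    exact .refl
  · obtain ⟨p, hpv⟩ : ∃ p, (p, v) ∈ D.arcs := by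
      simpa [inDeg_eq_zero_iff] using h0
    have hp : p ∈ D.verts := (D.arc_mem _ hpv).1
    have hlt : (D.verts.filter (D.SReach · p)).card < n :=
      hn ▸ Finset.card_filter_lt_card_filter (fun _ h => h.tail hpv) hp (.single hpv) (hD.1 p)
    exact (ih _ hlt hp rfl).tail hpv

end Reachability

lemma swOf_le_swOf {D Γ Γ' : Digr V} (hV : Γ'.verts = Γ.verts)
    (h : ∀ u v, Γ'.SReach u v → Γ.SReach u v) : swOf D Γ' ≤ swOf D Γ := by
  have hreach : ∀ u v, Γ'.Reach u v → Γ.Reach u v := fun u v huv => by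
    rcases Relation.reflTransGen_iff_eq_or_transGen.mp huv with rfl | h'
    · exact .refl
    · exact (h u v h').to_reflTransGen
  rw [swOf, swOf, hV]
  refine Finset.sup_mono_fun fun t _ => Set.ncard_le_ncard ?_ (D.arcs.finite_toSet.subset ?_)
  · rintro a ⟨ha, hat, hta⟩
    exact ⟨ha, h _ _ hat, hreach _ _ hta⟩
  · exact fun a ha => ha.1

structure IsTreeOrder (S : Finset V) (R : V → V → Prop) (r : V) : Prop where
  refl : ∀ v, R v v
  trans : ∀ {u v w}, R u v → R v w → R u w
  antisymm : ∀ {u v}, R u v → R v u → u = v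
  le_total_of_le : ∀ {u v w}, R u w → R v w → R u v ∨ R v u
  root_mem : r ∈ S
  root_le : ∀ v ∈ S, R r v

def CovByIn (S : Finset V) (R : V → V → Prop) (u v : V) : Prop :=
  u ≠ v ∧ R u v ∧ ∀ w ∈ S, R u w → R w v → w = u ∨ w = v

open Classical in
noncomputable def hasseDiagram (S : Finset V) (R : V → V → Prop) : Digr V where
  verts := S
  arcs := (S ×ˢ S).filter fun a => CovByIn S R a.1 a.2
  arc_mem a ha := by
    obtain ⟨hS, hne, -⟩ := Finset.mem_filter.1 ha
    exact ⟨(Finset.mem_product.1 hS).1, (Finset.mem_product.1 hS).2, hne⟩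

section Hasse

variable {S : Finset V} {R : V → V → Prop} {r u v : V}

lemma mem_hasseDiagram_arcs :
    (u, v) ∈ (hasseDiagram S R).arcs ↔ u ∈ S ∧ v ∈ S ∧ CovByIn S R u v := by
  simp [hasseDiagram, and_assoc]

namespace IsTreeOrder

variable (hR : IsTreeOrder S R r)
include hR

lemma exists_covByIn (hv : v ∈ S) (hvr : v ≠ r) : ∃ p ∈ S, CovByIn S R p v := by
  classical
  have hne : (S.filter fun u => u ≠ v ∧ R u v).Nonempty :=
    ⟨r, Finset.mem_filter.2 ⟨hR.root_mem, hvr.symm, hR.root_le v hv⟩⟩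
  -- a strict lower bound of `v` with the most lower bounds is covered by `v`
  obtain ⟨p, hp, hmax⟩ := Finset.exists_max_image _ (fun u => (S.filter (R · u)).card) hne
  obtain ⟨hpS, hpv, hRpv⟩ := Finset.mem_filter.1 hp
  refine ⟨p, hpS, hpv, hRpv, fun w hw hpw hwv => ?_⟩
  by_contra! hw'
  have hle := hmax w (Finset.mem_filter.2 ⟨hw, hw'.2, hwv⟩)
  have hlt := Finset.card_filter_lt_card_filter (s := S) (p := (R · p)) (q := (R · w))
    (fun _ h => hR.trans h hpw) hw (hR.refl w) fun hwp => hw'.1 (hR.antisymm hwp hpw)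
  omega

lemma covByIn_unique (hp : CovByIn S R u v) (hq : CovByIn S R w v) (huS : u ∈ S)
    (hwS : w ∈ S) : u = w := by
  rcases hR.le_total_of_le hp.2.1 hq.2.1 with huw | hwu
  · exact ((hp.2.2 w hwS huw hq.2.1).resolve_right hq.1).symm
  · exact (hq.2.2 u huS hwu hp.2.1).resolve_right hp.1

lemma le_and_ne_of_hasseDiagram_sReach (h : (hasseDiagram S R).SReach u v) :
    R u v ∧ u ≠ v := by
  induction h with
  | single h => exact ⟨(mem_hasseDiagram_arcs.1 h).2.2.2.1, (mem_hasseDiagram_arcs.1 h).2.2.1⟩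
  | @tail b c _ hbc ih =>
    obtain ⟨-, -, hne, hbc, -⟩ := mem_hasseDiagram_arcs.1 hbc
    refine ⟨hR.trans ih.1 hbc, ?_⟩
    rintro rfl
    exact hne (hR.antisymm hbc ih.1)

lemma hasseDiagram_reach_iff (hu : u ∈ S) :
    (hasseDiagram S R).Reach u v ↔ v ∈ S ∧ R u v := by
  classical
  constructor
  · intro h
    induction h with
    | refl => exact ⟨hu, hR.refl u⟩
    | tail _ hbc ih =>
      obtain ⟨-, hc, -, hbc, -⟩ := mem_hasseDiagram_arcs.1 hbc
      exact ⟨hc, hR.trans ih.2 hbc⟩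
  · rintro ⟨hv, huv⟩
    induction hn : (S.filter (R · v)).card using Nat.strong_induction_on generalizing v with
    | _ n ih =>
    by_cases hvu : v = u
    · exact hvu ▸ .refl
    have hvr : v ≠ r := by
      rintro rfl
      exact hvu (hR.antisymm huv (hR.root_le u hu)).symm
    obtain ⟨p, hp, hpv⟩ := hR.exists_covByIn hv hvr
    have hup : R u p := by
      rcases hR.le_total_of_le huv hpv.2.1 with hup | hpu
      · exact hup
      · rcases hpv.2.2 u hu hpu huv with rfl | rfl
        exacts [hR.refl _, absurd rfl hvu]
    have hlt : (S.filter (R · p)).card < n := hn ▸ Finset.card_filter_lt_card_filter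
      (fun _ h => hR.trans h hpv.2.1) hv (hR.refl v) fun hvp => hpv.1 (hR.antisymm hpv.2.1 hvp)
    exact (ih _ hlt hp hup rfl).tail (mem_hasseDiagram_arcs.2 ⟨hp, hv, hpv⟩)

lemma hasseDiagram_isOutTree [DecidableEq V] : (hasseDiagram S R).IsOutTree := by
  refine ⟨⟨fun v h => (hR.le_and_ne_of_hasseDiagram_sReach h).2 rfl, r, ⟨hR.root_mem, ?_⟩, ?_⟩,
    ?_⟩
  · refine inDeg_eq_zero_iff.2 fun u hu => ?_
    obtain ⟨huS, -, hne, hur, -⟩ := mem_hasseDiagram_arcs.1 hu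
    exact hne (hR.antisymm hur (hR.root_le u huS))
  · rintro v ⟨hv, h0⟩
    by_contra hvr
    obtain ⟨p, hp, hpv⟩ := hR.exists_covByIn hv hvr
    exact inDeg_eq_zero_iff.1 h0 p (mem_hasseDiagram_arcs.2 ⟨hp, hv, hpv⟩)
  · refine fun v _ => inDeg_le_one_iff.2 fun u w hu hw => ?_
    obtain ⟨huS, -, hu⟩ := mem_hasseDiagram_arcs.1 hu
    obtain ⟨hwS, -, hw⟩ := mem_hasseDiagram_arcs.1 hw
    exact hR.covByIn_unique hu hw huS hwS

end IsTreeOrder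

end Hasse

def WeakAdjIn (D : Digr V) (U : Set V) (a b : V) : Prop :=
  a ∈ U ∧ b ∈ U ∧ ((a, b) ∈ D.arcs ∨ (b, a) ∈ D.arcs)

instance {D : Digr V} {U : Set V} : Std.Symm (WeakAdjIn D U) :=
  ⟨fun _ _ ⟨ha, hb, h⟩ => ⟨hb, ha, h.symm⟩⟩

lemma WeakAdjIn.reflTransGen_mono {D : Digr V} {U W : Set V} (hUW : U ⊆ W) {a b : V}
    (h : Relation.ReflTransGen (WeakAdjIn D U) a b) :
    Relation.ReflTransGen (WeakAdjIn D W) a b :=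
  Relation.ReflTransGen.mono (fun _ _ h => ⟨hUW h.1, hUW h.2.1, h.2.2⟩) _ _ h

def LinkedBelow (D Γ : Digr V) (t : V) : V → Prop :=
  Relation.ReflTransGen (WeakAdjIn D {v | Γ.Reach t v}) t

section LinkedBelow

variable {D Γ : Digr V} {s t u v : V}

lemma LinkedBelow.reach (h : LinkedBelow D Γ t v) : Γ.Reach t v := by
  induction h with
  | refl => exact .refl
  | tail _ hstep => exact hstep.2.1

lemma LinkedBelow.mem_verts (h : LinkedBelow D Γ t v) (ht : t ∈ D.verts) : v ∈ D.verts := by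
  rcases Relation.ReflTransGen.cases_tail h with rfl | ⟨c, -, -, -, hcv | hvc⟩
  exacts [ht, (D.arc_mem _ hcv).2.1, (D.arc_mem _ hvc).1]

lemma LinkedBelow.trans (hst : LinkedBelow D Γ s t) (htv : LinkedBelow D Γ t v) :
    LinkedBelow D Γ s v :=
  Relation.ReflTransGen.trans hst
    (WeakAdjIn.reflTransGen_mono (fun _ hx => hst.reach.trans hx) htv)

lemma linkedBelow_of_reach (hst : Γ.Reach s t) (hs : LinkedBelow D Γ s v)
    (ht : LinkedBelow D Γ t v) : LinkedBelow D Γ s t :=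
  Relation.ReflTransGen.trans hs
    (symm (WeakAdjIn.reflTransGen_mono (fun _ hx => hst.trans hx) ht))

lemma Acyclic.linkedBelow_antisymm (hΓ : Γ.Acyclic) (huv : LinkedBelow D Γ u v)
    (hvu : LinkedBelow D Γ v u) : u = v :=
  hΓ.eq_of_reach_of_reach huv.reach hvu.reach

lemma IsOutTree.linkedBelow_total [DecidableEq V] (hΓ : Γ.IsOutTree) (hs : LinkedBelow D Γ s v)
    (ht : LinkedBelow D Γ t v) : LinkedBelow D Γ s t ∨ LinkedBelow D Γ t s :=
  (hΓ.reach_or_reach hs.reach ht.reach).imp (linkedBelow_of_reach · hs ht)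
    (linkedBelow_of_reach · ht hs)

lemma linkedBelow_of_isRoot [DecidableEq V] (hD : D.Rooted) (hΓ : Γ.Rooted)
    (hV : Γ.verts = D.verts) (hr : Γ.IsRoot r) (hv : v ∈ D.verts) : LinkedBelow D Γ r v := by
  obtain ⟨rD, hrD, -⟩ := hD.2
  have hbelow : ∀ u ∈ D.verts, Γ.Reach r u := fun u hu => hΓ.reach_of_isRoot hr (hV ▸ hu)
  have hfrom : ∀ {u}, D.Reach rD u →
      Relation.ReflTransGen (WeakAdjIn D {v | Γ.Reach r v}) rD u := by
    intro u h
    induction h with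
    | refl => exact .refl
    | tail _ hbc ih =>
      exact ih.tail ⟨hbelow _ (D.arc_mem _ hbc).1, hbelow _ (D.arc_mem _ hbc).2.1, .inl hbc⟩
  exact (symm (hfrom (hD.reach_of_isRoot hrD (hV ▸ hr.1)))).trans
    (hfrom (hD.reach_of_isRoot hrD hv))

lemma isTreeOrder_linkedBelow [DecidableEq V] (hD : D.Rooted) (hΓ : Γ.IsOutTree)
    (hV : Γ.verts = D.verts) (hr : Γ.IsRoot r) : IsTreeOrder D.verts (LinkedBelow D Γ) r where
  refl _ := .refl
  trans := LinkedBelow.trans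
  antisymm := hΓ.1.1.linkedBelow_antisymm
  le_total_of_le := hΓ.linkedBelow_total
  root_mem := hV ▸ hr.1
  root_le _ := linkedBelow_of_isRoot hD hΓ.1 hV hr

lemma wConnOn_linkedBelow : D.WConnOn {v | LinkedBelow D Γ t v} := by
  have hfrom : ∀ v, LinkedBelow D Γ t v →
      Relation.ReflTransGen (WeakAdjIn D {v | LinkedBelow D Γ t v}) t v := by
    intro v h
    induction h with
    | refl => exact .refl
    | tail hprev hstep ih => exact ih.tail ⟨hprev, hprev.tail hstep, hstep.2.2⟩
  exact fun u hu v hv => (symm (hfrom u hu)).trans (hfrom v hv)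

end LinkedBelow

end Digr

open Digr

/-- every tree extension can be made canonical without increasing
the width. -/
theorem stmt17 {V : Type} [DecidableEq V] (D Γ : Digr V)
    (hD : D.Rooted) (hΓ : IsTreeExt D Γ) :
    ∃ Γ' : Digr V, Canonical D Γ' ∧ swOf D Γ' ≤ swOf D Γ := by
  obtain ⟨hT, hV, harcs⟩ := hΓ
  obtain ⟨r, hr, -⟩ := hT.1.2
  have hR := isTreeOrder_linkedBelow hD hT hV hr
  set Γ' := hasseDiagram D.verts (LinkedBelow D Γ)
  have hreach : ∀ t ∈ D.verts, {v | Γ'.Reach t v} = {v | LinkedBelow D Γ t v} := fun t ht =>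
    Set.ext fun v =>
      (hR.hasseDiagram_reach_iff ht).trans ⟨And.right, fun h => ⟨h.mem_verts ht, h⟩⟩
  have hsReach : ∀ u v, Γ'.SReach u v → Γ.SReach u v := fun u v h =>
    sReach_of_reach_of_ne (hR.le_and_ne_of_hasseDiagram_sReach h).1.reach
      (hR.le_and_ne_of_hasseDiagram_sReach h).2
  refine ⟨Γ', ⟨⟨hR.hasseDiagram_isOutTree, rfl, fun a ha => ?_⟩, fun t ht => ?_⟩,
    swOf_le_swOf hV.symm hsReach⟩
  · obtain ⟨h₁, h₂, hne⟩ := D.arc_mem a ha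
    have hlinked : LinkedBelow D Γ a.1 a.2 :=
      .single ⟨.refl, (harcs a ha).to_reflTransGen, .inl ha⟩
    exact sReach_of_reach_of_ne ((hR.hasseDiagram_reach_iff h₁).2 ⟨h₂, hlinked⟩) hne
  · rw [hreach t ht]
    exact wConnOn_linkedBelow
end
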